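/- For an n×n matrix A over R_max with n ≥ 2 and mr_GM(A) = 2 (i.e., some two rows are Gondran–Minoux independent but any three rows are Gondran–Minoux dependent), the tropical rank, determinantal rank, maximal row and column Gondran–Minoux ranks, factor rank, and row rank of A are all equal to 2. -/

import Mathlib

open scoped Classical

noncomputable section

/-! All notions are over `R_max = (ℝ ∪ {-∞}, max, +)`, modelled by `WithBot ℝ`
with `⊔` as max-plus addition and `+` as max-plus multiplication. -/

/-- Max-plus matrix product. -/
def mpMul {m k n : ℕ} (A : Matrix (Fin m) (Fin k) (WithBot ℝ))
    (B : Matrix (Fin k) (Fin n) (WithBot ℝ)) : Matrix (Fin m) (Fin n) (WithBot ℝ) :=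
  fun i j => Finset.univ.sup fun l => A i l + B l j

/-- A square max-plus matrix is tropically nonsingular if the maximum in its
permanent is finite and attained by exactly one permutation. -/
def TropNonsing {k : ℕ} (M : Matrix (Fin k) (Fin k) (WithBot ℝ)) : Prop :=
  ∃ σ : Equiv.Perm (Fin k), (∑ i, M i (σ i)) ≠ ⊥ ∧
    ∀ τ : Equiv.Perm (Fin k), τ ≠ σ → (∑ i, M i (τ i)) < ∑ i, M i (σ i)

/-- Tropical rank: largest size of a tropically nonsingular square submatrix. -/
def tropRank {m n : ℕ} (A : Matrix (Fin m) (Fin n) (WithBot ℝ)) : ℕ :=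
  sSup {k | ∃ (r : Fin k → Fin m) (c : Fin k → Fin n),
    Function.Injective r ∧ Function.Injective c ∧
    TropNonsing (fun a b => A (r a) (c b))}

/-- Positive determinant: maximum over even permutations of `Σ_i m_{iσ(i)}`. -/
def detp {k : ℕ} (M : Matrix (Fin k) (Fin k) (WithBot ℝ)) : WithBot ℝ :=
  (Finset.univ.filter fun σ : Equiv.Perm (Fin k) => Equiv.Perm.sign σ = 1).sup
    fun σ => ∑ i, M i (σ i)

/-- Negative determinant: maximum over odd permutations. -/
def detm {k : ℕ} (M : Matrix (Fin k) (Fin k) (WithBot ℝ)) : WithBot ℝ :=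
  (Finset.univ.filter fun σ : Equiv.Perm (Fin k) => Equiv.Perm.sign σ = -1).sup
    fun σ => ∑ i, M i (σ i)

/-- Determinantal rank: largest size of a square submatrix with distinct positive
and negative determinants. -/
def detRank {m n : ℕ} (A : Matrix (Fin m) (Fin n) (WithBot ℝ)) : ℕ :=
  sSup {k | ∃ (r : Fin k → Fin m) (c : Fin k → Fin n),
    Function.Injective r ∧ Function.Injective c ∧
    detp (fun a b => A (r a) (c b)) ≠ detm (fun a b => A (r a) (c b))}

/-- Gondran–Minoux linear dependence of a family of vectors in `R_max^n`. -/
def GMdep {k n : ℕ} (w : Fin k → Fin n → WithBot ℝ) : Prop :=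
  ∃ (I : Finset (Fin k)) (α : Fin k → WithBot ℝ),
    (∃ j, α j ≠ ⊥) ∧
    ∀ l : Fin n, (I.sup fun j => α j + w j l) = (Iᶜ.sup fun j => α j + w j l)

/-- Maximal row rank in the Gondran–Minoux sense: maximal number of rows forming a
Gondran–Minoux independent family. -/
def gmRowRank {m n : ℕ} (A : Matrix (Fin m) (Fin n) (WithBot ℝ)) : ℕ :=
  sSup {k | ∃ r : Fin k → Fin m, Function.Injective r ∧ ¬ GMdep (fun i => A (r i))}

/-- Factor rank: smallest `k` such that `A = BC` with `B` of size `m×k` and `C` of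
size `k×n`. -/
def facRank {m n : ℕ} (A : Matrix (Fin m) (Fin n) (WithBot ℝ)) : ℕ :=
  sInf {k | ∃ (B : Matrix (Fin m) (Fin k) (WithBot ℝ))
    (C : Matrix (Fin k) (Fin n) (WithBot ℝ)), A = mpMul B C}

/-- The max-plus span of a finite family of vectors. -/
def mpSpanFam {k n : ℕ} (g : Fin k → Fin n → WithBot ℝ) : Set (Fin n → WithBot ℝ) :=
  {v | ∃ α : Fin k → WithBot ℝ, v = fun j => Finset.univ.sup fun i => α i + g i j}

/-- The row space of a max-plus matrix. -/
def mpRowSpace {m n : ℕ} (A : Matrix (Fin m) (Fin n) (WithBot ℝ)) :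
    Set (Fin n → WithBot ℝ) := mpSpanFam (fun i => A i)

/-- Row rank: the weak dimension of the row space, i.e. the minimal cardinality of a
generating family of the row space (which equals the minimal cardinality of a weakly
independent generating family). -/
def rowRank {m n : ℕ} (A : Matrix (Fin m) (Fin n) (WithBot ℝ)) : ℕ :=
  sInf {k | ∃ g : Fin k → (Fin n → WithBot ℝ), mpSpanFam g = mpRowSpace A}

/-!
Two Gondran–Minoux independent rows `A i`, `A j` give a `2 × 2` minor with
`A i l + A j l' ≠ A i l' + A j l`, which bounds every rank from below by `2`.

For the upper bounds, if three non-zero vectors are Gondran–Minoux dependent, one of them is a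
max-plus combination of the other two. Since any three rows are dependent, a pair of rows can be
exchanged row by row until it spans the whole row space, so `A = B ⊙ C` with inner dimension `2`.
In a square submatrix of size `k > 2` of such a product, two rows realize their terms of a
permutation through the same inner index, and transposing them yields a permutation of the
opposite sign and no smaller weight; hence no such submatrix is tropically nonsingular or has
distinct positive and negative determinants. The columns of `A` lie in the span of the two
columns of `B`, and in a two-generated space the coefficient vector of middle slope among any
three is a combination of the other two, so any three columns are dependent.
-/

open Finset Function Equiv
open scoped Matrix

lemma WithBot.finset_sup_add {ι : Type*} (s : Finset ι) (f : ι → WithBot ℝ) (a : WithBot ℝ) :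
    s.sup f + a = s.sup fun i => f i + a :=
  apply_sup_eq_sup_comp (· + a) (fun x y => (max_add_add_right x y a).symm) (WithBot.bot_add a)

lemma WithBot.add_finset_sup {ι : Type*} (s : Finset ι) (f : ι → WithBot ℝ) (a : WithBot ℝ) :
    a + s.sup f = s.sup fun i => a + f i := by
  simpa only [add_comm a] using WithBot.finset_sup_add s f a

lemma WithBot.eq_bot_of_forall_add_eq_bot {n : ℕ} {a : WithBot ℝ} {u : Fin n → WithBot ℝ}
    (hu : u ≠ ⊥) (h : ∀ l, a + u l = ⊥) : a = ⊥ := by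
  obtain ⟨l, hl⟩ := Function.ne_iff.1 hu
  exact (WithBot.add_eq_bot.1 (h l)).resolve_right hl

lemma Fin.sup_univ_two {α : Type*} [SemilatticeSup α] [OrderBot α] (f : Fin 2 → α) :
    univ.sup f = f 0 ⊔ f 1 := by
  simp [Fin.univ_succ]

lemma Fin.sup_univ_three {α : Type*} [SemilatticeSup α] [OrderBot α] (f : Fin 3 → α) :
    univ.sup f = f 0 ⊔ f 1 ⊔ f 2 := by
  simp [Fin.univ_succ, sup_assoc]

lemma Finset.sup_eq_univ_sup_ite {ι α : Type*} [Fintype ι] [DecidableEq ι] [SemilatticeSup α]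
    [OrderBot α] (I : Finset ι) (f : ι → α) :
    I.sup f = univ.sup fun i => if i ∈ I then f i else ⊥ := by
  simp [sup_ite]

def mpComb {k n : ℕ} (α : Fin k → WithBot ℝ) (g : Fin k → Fin n → WithBot ℝ) :
    Fin n → WithBot ℝ :=
  fun j => univ.sup fun i => α i + g i j

section Span

variable {k d n : ℕ}

lemma mpComb_mpComb (β : Fin k → WithBot ℝ) (κ : Fin k → Fin d → WithBot ℝ)
    (g : Fin d → Fin n → WithBot ℝ) :
    mpComb (mpComb β κ) g = mpComb β fun i => mpComb (κ i) g := by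
  ext j
  simp only [mpComb, WithBot.finset_sup_add, WithBot.add_finset_sup, add_assoc]
  exact Finset.sup_comm _ _ _

lemma mpSpanFam_subset {g : Fin k → Fin n → WithBot ℝ} {g' : Fin d → Fin n → WithBot ℝ}
    (h : ∀ i, g i ∈ mpSpanFam g') : mpSpanFam g ⊆ mpSpanFam g' := by
  choose κ hκ using h
  rintro v ⟨β, rfl⟩
  rw [show g = fun i => mpComb (κ i) g' from funext hκ]
  exact ⟨mpComb β κ, (mpComb_mpComb β κ g').symm⟩

lemma bot_mem_mpSpanFam (g : Fin k → Fin n → WithBot ℝ) : ⊥ ∈ mpSpanFam g :=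
  ⟨⊥, by ext; simp⟩

lemma mem_mpSpanFam_self (g : Fin k → Fin n → WithBot ℝ) (i : Fin k) : g i ∈ mpSpanFam g := by
  refine ⟨fun t => if t = i then 0 else ⊥, funext fun j => le_antisymm ?_ ?_⟩
  · exact le_sup_of_le (mem_univ i) (by simp)
  · exact Finset.sup_le fun t _ => by by_cases h : t = i <;> simp [h]

lemma mem_mpSpanFam_pair {g h v : Fin n → WithBot ℝ} :
    v ∈ mpSpanFam ![g, h] ↔ ∃ c d : WithBot ℝ, ∀ l, v l = (c + g l) ⊔ (d + h l) := by
  constructor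
  · rintro ⟨α, rfl⟩
    exact ⟨α 0, α 1, fun l => Fin.sup_univ_two _⟩
  · rintro ⟨c, d, hv⟩
    exact ⟨![c, d], funext fun l =>
      (hv l).trans (Fin.sup_univ_two fun i => ![c, d] i + ![g, h] i l).symm⟩

lemma mem_mpSpanFam_pair_comm {g h v : Fin n → WithBot ℝ} :
    v ∈ mpSpanFam ![g, h] ↔ v ∈ mpSpanFam ![h, g] := by
  simp only [mem_mpSpanFam_pair]
  exact ⟨fun ⟨c, d, hv⟩ => ⟨d, c, fun l => (hv l).trans (sup_comm _ _)⟩,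
    fun ⟨c, d, hv⟩ => ⟨d, c, fun l => (hv l).trans (sup_comm _ _)⟩⟩

end Span

section GondranMinoux

variable {k m n : ℕ}

lemma sup_extend_add_eq {e : Fin k → Fin m} (he : Injective e) (α : Fin k → WithBot ℝ)
    (w : Fin m → Fin n → WithBot ℝ) (l : Fin n) (J : Finset (Fin m)) :
    (J.sup fun j => extend e α ⊥ j + w j l) =
      (univ.filter fun t => e t ∈ J).sup fun t => α t + w (e t) l := by
  apply le_antisymm
  · refine Finset.sup_le fun j hj => ?_
    by_cases hje : ∃ t, e t = j
    · obtain ⟨t, rfl⟩ := hje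
      rw [he.extend_apply]
      exact le_sup (f := fun t => α t + w (e t) l) (by simpa using hj)
    · simp [extend_apply' _ _ _ hje]
  · refine Finset.sup_le fun t ht => ?_
    rw [← he.extend_apply α ⊥ t]
    exact le_sup (f := fun j => extend e α ⊥ j + w j l) (by simpa using ht)

lemma GMdep.of_comp {w : Fin m → Fin n → WithBot ℝ} {e : Fin k → Fin m} (he : Injective e)
    (hd : GMdep fun t => w (e t)) : GMdep w := by
  obtain ⟨I, α, ⟨j, hj⟩, hbal⟩ := hd
  refine ⟨I.image e, extend e α ⊥, ⟨e j, by rwa [he.extend_apply]⟩, fun l => ?_⟩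
  rw [sup_extend_add_eq he, sup_extend_add_eq he]
  convert hbal l using 2 <;> ext t <;> simp [he.eq_iff]

lemma gmdep_of_eq_mpComb {w : Fin k → Fin n → WithBot ℝ} {i : Fin k} {α : Fin k → WithBot ℝ}
    (hαi : α i = ⊥) (hw : w i = mpComb α w) : GMdep w := by
  refine ⟨{i}, update α i 0, ⟨i, by simp⟩, fun l => ?_⟩
  have hrest : (({i}ᶜ : Finset (Fin k)).sup fun j => update α i 0 j + w j l) = mpComb α w l := by
    rw [mpComb, ← insert_erase (mem_univ i), sup_insert, hαi, WithBot.bot_add, bot_sup_eq,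
      ← compl_singleton]
    exact sup_congr rfl fun j hj => by rw [update_of_ne (by simpa using hj)]
  rw [hrest, ← hw]
  simp

lemma gmdep_of_eq_bot {w : Fin k → Fin n → WithBot ℝ} {i : Fin k} (hw : w i = ⊥) : GMdep w :=
  gmdep_of_eq_mpComb (α := ⊥) rfl (by rw [hw]; ext; simp [mpComb])

lemma gmdep_pair_iff_exists {w : Fin 2 → Fin n → WithBot ℝ} :
    GMdep w ↔ ∃ a b : WithBot ℝ, (a ≠ ⊥ ∨ b ≠ ⊥) ∧ ∀ l, a + w 0 l = b + w 1 l := by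
  constructor
  · rintro ⟨I, α, ⟨j, hj⟩, hbal⟩
    refine ⟨α 0, α 1, by fin_cases j <;> simp_all, fun l => ?_⟩
    have hl := hbal l
    rw [sup_eq_univ_sup_ite I, sup_eq_univ_sup_ite Iᶜ, Fin.sup_univ_two, Fin.sup_univ_two] at hl
    by_cases h0 : 0 ∈ I <;> by_cases h1 : 1 ∈ I <;>
      simp [h0, h1, eq_comm (a := (⊥ : WithBot ℝ))] at hl
    · obtain ⟨h | h, h' | h'⟩ := hl <;> simp [h, h']
    · exact hl
    · exact hl.symm
    · obtain ⟨h | h, h' | h'⟩ := hl <;> simp [h, h']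
  · rintro ⟨a, b, hab, h⟩
    refine ⟨{0}, ![a, b], by simpa [Fin.exists_fin_two] using hab, fun l => ?_⟩
    rw [sup_eq_univ_sup_ite {0}, sup_eq_univ_sup_ite {0}ᶜ, Fin.sup_univ_two, Fin.sup_univ_two]
    simp [h l]

lemma gmdep_pair_iff {w : Fin 2 → Fin n → WithBot ℝ} :
    GMdep w ↔ ∀ l l', w 0 l + w 1 l' = w 0 l' + w 1 l := by
  rw [gmdep_pair_iff_exists]
  constructor
  · rintro ⟨a, b, hab, h⟩ l l'
    rcases eq_or_ne a ⊥ with rfl | ha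
    · have hw : w 1 = ⊥ := funext fun l => (WithBot.add_eq_bot.1
        ((h l).symm.trans (WithBot.bot_add _))).resolve_left (hab.resolve_left (not_not.2 rfl))
      simp [hw]
    rcases eq_or_ne b ⊥ with rfl | hb
    · have hw : w 0 = ⊥ := funext fun l => (WithBot.add_eq_bot.1
        ((h l).trans (WithBot.bot_add _))).resolve_left ha
      simp [hw]
    apply WithBot.add_left_cancel (WithBot.add_ne_bot.2 ⟨ha, hb⟩)
    calc a + b + (w 0 l + w 1 l') = (a + w 0 l) + (b + w 1 l') := by ac_rfl
      _ = (b + w 1 l) + (a + w 0 l') := by rw [h l, h l']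
      _ = a + b + (w 0 l' + w 1 l) := by ac_rfl
  · intro h
    by_cases hboth : ∃ l₀, w 0 l₀ ≠ ⊥ ∧ w 1 l₀ ≠ ⊥
    · obtain ⟨l₀, -, h₁⟩ := hboth
      exact ⟨w 1 l₀, w 0 l₀, Or.inl h₁, fun l => by rw [add_comm, h l l₀]⟩
    simp only [not_exists, not_and, ne_eq, not_not] at hboth
    have hbot : w 0 = ⊥ ∨ w 1 = ⊥ := by
      by_contra! hne
      obtain ⟨l₁, hl₁⟩ := Function.ne_iff.1 hne.1
      obtain ⟨l₂, hl₂⟩ := Function.ne_iff.1 hne.2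
      refine hl₂ (hboth l₂ fun h₀ => ?_)
      have := h l₁ l₂
      rw [h₀, WithBot.bot_add] at this
      exact WithBot.add_ne_bot.2 ⟨hl₁, hl₂⟩ this
    rcases hbot with h₀ | h₁
    · exact ⟨0, ⊥, Or.inl WithBot.coe_ne_bot, fun l => by simp [h₀]⟩
    · exact ⟨⊥, 0, Or.inr WithBot.coe_ne_bot, fun l => by simp [h₁]⟩

def OneInSpanOfOthers (w : Fin 3 → Fin n → WithBot ℝ) : Prop :=
  w 0 ∈ mpSpanFam ![w 1, w 2] ∨ w 1 ∈ mpSpanFam ![w 0, w 2] ∨ w 2 ∈ mpSpanFam ![w 0, w 1]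

lemma mpComb_fin_three (a b c : WithBot ℝ) (w : Fin 3 → Fin n → WithBot ℝ) :
    mpComb ![a, b, c] w = fun l => (a + w 0 l) ⊔ (b + w 1 l) ⊔ (c + w 2 l) :=
  funext fun _ => Fin.sup_univ_three _

lemma OneInSpanOfOthers.gmdep {w : Fin 3 → Fin n → WithBot ℝ} (h : OneInSpanOfOthers w) :
    GMdep w := by
  simp only [OneInSpanOfOthers, mem_mpSpanFam_pair] at h
  rcases h with ⟨c, d, h⟩ | ⟨c, d, h⟩ | ⟨c, d, h⟩
  · exact gmdep_of_eq_mpComb (i := 0) (α := ![⊥, c, d]) rfl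
      (by rw [mpComb_fin_three]; ext l; simp [h l])
  · exact gmdep_of_eq_mpComb (i := 1) (α := ![c, ⊥, d]) rfl
      (by rw [mpComb_fin_three]; ext l; simp [h l])
  · exact gmdep_of_eq_mpComb (i := 2) (α := ![c, d, ⊥]) rfl
      (by rw [mpComb_fin_three]; ext l; simp [h l])

lemma mem_mpSpanFam_pair_of_add_eq_sup {u v w : Fin n → WithBot ℝ} {a b c : WithBot ℝ}
    (hv : v ≠ ⊥) (hw : w ≠ ⊥) (habc : a ≠ ⊥ ∨ b ≠ ⊥ ∨ c ≠ ⊥)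
    (h : ∀ l, a + u l = (b + v l) ⊔ (c + w l)) : u ∈ mpSpanFam ![v, w] := by
  have ha : a ≠ ⊥ := by
    rintro rfl
    have hbc : ∀ l, b + v l = ⊥ ∧ c + w l = ⊥ := fun l => by
      rw [← sup_eq_bot_iff, ← h l, WithBot.bot_add]
    simp [WithBot.eq_bot_of_forall_add_eq_bot hv fun l => (hbc l).1,
      WithBot.eq_bot_of_forall_add_eq_bot hw fun l => (hbc l).2] at habc
  lift a to ℝ using ha
  refine mem_mpSpanFam_pair.2 ⟨((-a : ℝ) : WithBot ℝ) + b, ((-a : ℝ) : WithBot ℝ) + c, fun l => ?_⟩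
  rw [add_assoc, add_assoc, max_add_add_left, ← h l, ← add_assoc, ← WithBot.coe_add,
    neg_add_cancel, WithBot.coe_zero, zero_add]

lemma GMdep.oneInSpanOfOthers {w : Fin 3 → Fin n → WithBot ℝ} (hw : ∀ t, w t ≠ ⊥)
    (hd : GMdep w) : OneInSpanOfOthers w := by
  obtain ⟨I, α, ⟨j, hj⟩, hbal⟩ := hd
  have hα : α 0 ≠ ⊥ ∨ α 1 ≠ ⊥ ∨ α 2 ≠ ⊥ := by fin_cases j <;> simp_all
  have hne : ¬ ∀ l, (α 0 + w 0 l) ⊔ (α 1 + w 1 l) ⊔ (α 2 + w 2 l) = ⊥ := fun h => by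
    simp only [sup_eq_bot_iff] at h
    rcases hα with h' | h' | h'
    exacts [h' (WithBot.eq_bot_of_forall_add_eq_bot (hw 0) fun l => (h l).1.1),
      h' (WithBot.eq_bot_of_forall_add_eq_bot (hw 1) fun l => (h l).1.2),
      h' (WithBot.eq_bot_of_forall_add_eq_bot (hw 2) fun l => (h l).2)]
  simp only [sup_eq_univ_sup_ite I, sup_eq_univ_sup_ite Iᶜ, Fin.sup_univ_three, mem_compl]
    at hbal
  by_cases h0 : 0 ∈ I <;> by_cases h1 : 1 ∈ I <;> by_cases h2 : 2 ∈ I <;>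
    simp only [h0, h1, h2, if_true, if_false, not_true_eq_false, not_false_eq_true, bot_sup_eq,
      sup_bot_eq] at hbal
  · exact absurd hbal hne
  · exact Or.inr <| Or.inr <| mem_mpSpanFam_pair_of_add_eq_sup (hw 0) (hw 1) (by tauto)
      fun l => (hbal l).symm
  · exact Or.inr <| Or.inl <| mem_mpSpanFam_pair_of_add_eq_sup (hw 0) (hw 2) (by tauto)
      fun l => (hbal l).symm
  · exact Or.inl <| mem_mpSpanFam_pair_of_add_eq_sup (hw 1) (hw 2) hα hbal
  · exact Or.inl <| mem_mpSpanFam_pair_of_add_eq_sup (hw 1) (hw 2) hα fun l => (hbal l).symm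
  · exact Or.inr <| Or.inl <| mem_mpSpanFam_pair_of_add_eq_sup (hw 0) (hw 2) (by tauto) hbal
  · exact Or.inr <| Or.inr <| mem_mpSpanFam_pair_of_add_eq_sup (hw 0) (hw 1) (by tauto) hbal
  · exact absurd (fun l => (hbal l).symm) hne

end GondranMinoux

section Slopes

variable {n : ℕ}

/-- `p 1 - p 0 ≤ q 1 - q 0`, cross-multiplied so that it is meaningful when coordinates are `⊥`. -/
def SlopeLE (p q : Fin 2 → WithBot ℝ) : Prop :=
  p 1 + q 0 ≤ q 1 + p 0

lemma SlopeLE.total (p q : Fin 2 → WithBot ℝ) : SlopeLE p q ∨ SlopeLE q p :=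
  le_total _ _

lemma ne_bot_iff_fin_two {p : Fin 2 → WithBot ℝ} : p ≠ ⊥ ↔ p 0 ≠ ⊥ ∨ p 1 ≠ ⊥ := by
  rw [Ne, funext_iff, Fin.forall_fin_two]
  tauto

lemma mem_mpSpanFam_pair_of_slopeLE {p q r : Fin 2 → WithBot ℝ} (hp : p ≠ ⊥) (hr : r ≠ ⊥)
    (hpq : SlopeLE p q) (hqr : SlopeLE q r) : q ∈ mpSpanFam ![p, r] := by
  simp only [mem_mpSpanFam_pair, Fin.forall_fin_two]
  rw [ne_bot_iff_fin_two] at hp hr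
  unfold SlopeLE at hpq hqr
  generalize p 0 = p₀, p 1 = p₁, q 0 = q₀, q 1 = q₁, r 0 = r₀, r 1 = r₁ at *
  cases q₀ with
  | bot =>
    cases q₁ with
    | bot => exact ⟨⊥, ⊥, by simp, by simp⟩
    | coe b =>
      have hr₀ : r₀ = ⊥ := by simpa using hqr
      obtain ⟨y, rfl⟩ := WithBot.ne_bot_iff_exists.1 (hr.resolve_left (not_not.2 hr₀))
      refine ⟨⊥, ((b - y : ℝ) : WithBot ℝ), by simp [hr₀], ?_⟩
      rw [← WithBot.coe_add, sub_add_cancel]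
      simp
  | coe a =>
    cases q₁ with
    | bot =>
      have hp₁ : p₁ = ⊥ := by simpa using hpq
      obtain ⟨x, rfl⟩ := WithBot.ne_bot_iff_exists.1 (hp.resolve_right (not_not.2 hp₁))
      refine ⟨((a - x : ℝ) : WithBot ℝ), ⊥, ?_, by simp [hp₁]⟩
      rw [← WithBot.coe_add, sub_add_cancel]
      simp
    | coe b =>
      have hp₀ : p₀ ≠ ⊥ := by
        rintro rfl
        exact hp.resolve_left (not_not.2 rfl) (by simpa using hpq)
      have hr₁ : r₁ ≠ ⊥ := by
        rintro rfl
        exact hr.resolve_right (not_not.2 rfl) (by simpa using hqr)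
      obtain ⟨x, rfl⟩ := WithBot.ne_bot_iff_exists.1 hp₀
      obtain ⟨y, rfl⟩ := WithBot.ne_bot_iff_exists.1 hr₁
      refine ⟨((a - x : ℝ) : WithBot ℝ), ((b - y : ℝ) : WithBot ℝ), ?_, ?_⟩
      · rw [← WithBot.coe_add, sub_add_cancel, left_eq_sup]
        cases r₀ with
        | bot => simp
        | coe z => norm_cast at hqr ⊢; linarith
      · rw [← WithBot.coe_add, sub_add_cancel, right_eq_sup]
        cases p₁ with
        | bot => simp
        | coe z => norm_cast at hpq ⊢; linarith

end Slopes

section ThreeInPlane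

variable {d n : ℕ}

lemma oneInSpanOfOthers_fin_two (κ : Fin 3 → Fin 2 → WithBot ℝ) : OneInSpanOfOthers κ := by
  unfold OneInSpanOfOthers
  by_cases h0 : κ 0 = ⊥
  · exact Or.inl (h0 ▸ bot_mem_mpSpanFam _)
  by_cases h1 : κ 1 = ⊥
  · exact Or.inr (Or.inl (h1 ▸ bot_mem_mpSpanFam _))
  by_cases h2 : κ 2 = ⊥
  · exact Or.inr (Or.inr (h2 ▸ bot_mem_mpSpanFam _))
  rcases SlopeLE.total (κ 0) (κ 1) with h01 | h10 <;>
    rcases SlopeLE.total (κ 1) (κ 2) with h12 | h21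
  · exact Or.inr (Or.inl (mem_mpSpanFam_pair_of_slopeLE h0 h2 h01 h12))
  · rcases SlopeLE.total (κ 0) (κ 2) with h02 | h20
    · exact Or.inr (Or.inr (mem_mpSpanFam_pair_of_slopeLE h0 h1 h02 h21))
    · exact Or.inl (mem_mpSpanFam_pair_comm.1 (mem_mpSpanFam_pair_of_slopeLE h2 h1 h20 h01))
  · rcases SlopeLE.total (κ 0) (κ 2) with h02 | h20
    · exact Or.inl (mem_mpSpanFam_pair_of_slopeLE h1 h2 h10 h02)
    · exact Or.inr (Or.inr
        (mem_mpSpanFam_pair_comm.1 (mem_mpSpanFam_pair_of_slopeLE h1 h0 h12 h20)))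
  · exact Or.inr (Or.inl
      (mem_mpSpanFam_pair_comm.1 (mem_mpSpanFam_pair_of_slopeLE h2 h0 h21 h10)))

lemma mpComb_mem_mpSpanFam_pair {x y z : Fin d → WithBot ℝ} (hx : x ∈ mpSpanFam ![y, z])
    (g : Fin d → Fin n → WithBot ℝ) : mpComb x g ∈ mpSpanFam ![mpComb y g, mpComb z g] := by
  obtain ⟨β, rfl⟩ := hx
  refine ⟨β, (mpComb_mpComb β _ g).trans ?_⟩
  congr 1
  ext i : 1
  fin_cases i <;> rfl

lemma OneInSpanOfOthers.mpComb {κ : Fin 3 → Fin d → WithBot ℝ} (h : OneInSpanOfOthers κ)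
    (g : Fin d → Fin n → WithBot ℝ) : OneInSpanOfOthers fun t => mpComb (κ t) g := by
  rcases h with h | h | h
  exacts [Or.inl (mpComb_mem_mpSpanFam_pair h g), Or.inr (Or.inl (mpComb_mem_mpSpanFam_pair h g)),
    Or.inr (Or.inr (mpComb_mem_mpSpanFam_pair h g))]

lemma gmdep_of_forall_mem_mpSpanFam_pair {w : Fin 3 → Fin n → WithBot ℝ}
    {g : Fin 2 → Fin n → WithBot ℝ} (h : ∀ t, w t ∈ mpSpanFam g) : GMdep w := by
  choose κ hκ using h
  rw [show w = fun t => mpComb (κ t) g from funext hκ]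
  exact ((oneInSpanOfOthers_fin_two κ).mpComb g).gmdep

end ThreeInPlane

section RowSpace

variable {m n : ℕ}

lemma exists_row_pair_extend (A : Matrix (Fin m) (Fin n) (WithBot ℝ))
    (hdep : ∀ r : Fin 3 → Fin m, Injective r → GMdep fun t => A (r t))
    {p q : Fin m} (hpq : p ≠ q) (hp : A p ≠ ⊥) (hq : A q ≠ ⊥) (a : Fin m) :
    ∃ p' q', p' ≠ q' ∧ A p' ≠ ⊥ ∧ A q' ≠ ⊥ ∧
      mpSpanFam ![A p, A q] ⊆ mpSpanFam ![A p', A q'] ∧ A a ∈ mpSpanFam ![A p', A q'] := by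
  by_cases ha : A a ∈ mpSpanFam ![A p, A q]
  · exact ⟨p, q, hpq, hp, hq, subset_rfl, ha⟩
  have hap : a ≠ p := by rintro rfl; exact ha (mem_mpSpanFam_self ![A a, A q] 0)
  have haq : a ≠ q := by rintro rfl; exact ha (mem_mpSpanFam_self ![A p, A a] 1)
  have ha' : A a ≠ ⊥ := fun h => ha (h ▸ bot_mem_mpSpanFam _)
  have hinj : Injective ![p, q, a] := by
    intro i j
    fin_cases i <;> fin_cases j <;> simp [hpq, hap, haq, hpq.symm, hap.symm, haq.symm]
  rcases (hdep _ hinj).oneInSpanOfOthers (by intro t; fin_cases t <;> assumption) with h | h | h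
  · refine ⟨q, a, haq.symm, hq, ha', mpSpanFam_subset ?_, mem_mpSpanFam_self ![A q, A a] 1⟩
    exact Fin.forall_fin_two.2 ⟨h, mem_mpSpanFam_self ![A q, A a] 0⟩
  · refine ⟨p, a, hap.symm, hp, ha', mpSpanFam_subset ?_, mem_mpSpanFam_self ![A p, A a] 1⟩
    exact Fin.forall_fin_two.2 ⟨mem_mpSpanFam_self ![A p, A a] 0, h⟩
  · exact absurd h ha

lemma exists_rows_forall_mem_mpSpanFam_pair (A : Matrix (Fin m) (Fin n) (WithBot ℝ))
    (hdep : ∀ r : Fin 3 → Fin m, Injective r → GMdep fun t => A (r t))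
    {i j : Fin m} (hij : i ≠ j) (hi : A i ≠ ⊥) (hj : A j ≠ ⊥) :
    ∃ p q, ∀ k, A k ∈ mpSpanFam ![A p, A q] := by
  suffices h : ∀ s : Finset (Fin m), ∃ p q, p ≠ q ∧ A p ≠ ⊥ ∧ A q ≠ ⊥ ∧
      ∀ k ∈ s, A k ∈ mpSpanFam ![A p, A q] by
    obtain ⟨p, q, -, -, -, h⟩ := h univ
    exact ⟨p, q, fun k => h k (mem_univ k)⟩
  intro s
  induction s using Finset.induction_on with
  | empty => exact ⟨i, j, hij, hi, hj, by simp⟩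
  | insert a s _ ih =>
    obtain ⟨p, q, hpq, hp, hq, hs⟩ := ih
    obtain ⟨p', q', hpq', hp', hq', hsub, ha⟩ := exists_row_pair_extend A hdep hpq hp hq a
    exact ⟨p', q', hpq', hp', hq', (forall_mem_insert _ _ _).2 ⟨ha, fun k hk => hsub (hs k hk)⟩⟩

end RowSpace

section Exchange

lemma Finset.sum_le_sum_of_eq_off_pair {ι M : Type*} [Fintype ι] [DecidableEq ι]
    [AddCommMonoid M] [PartialOrder M] [IsOrderedAddMonoid M] {f g : ι → M} {i j : ι}
    (hij : i ≠ j) (hpair : f i + f j ≤ g i + g j) (hrest : ∀ l, l ≠ i → l ≠ j → f l = g l) :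
    ∑ l, f l ≤ ∑ l, g l := by
  rw [← sum_add_sum_compl {i, j} f, ← sum_add_sum_compl {i, j} g, sum_pair hij, sum_pair hij]
  refine add_le_add hpair (le_of_eq (sum_congr rfl fun l hl => hrest l ?_ ?_)) <;>
    simp_all

variable {k d : ℕ}

lemma exists_sign_neg_sum_le_of_lt (hd : 0 < d) (hdk : d < k)
    (B : Matrix (Fin k) (Fin d) (WithBot ℝ)) (C : Matrix (Fin d) (Fin k) (WithBot ℝ))
    (σ : Perm (Fin k)) :
    ∃ τ : Perm (Fin k), Perm.sign τ = -Perm.sign σ ∧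
      ∑ i, mpMul B C i (σ i) ≤ ∑ i, mpMul B C i (τ i) := by
  have : Nonempty (Fin d) := ⟨⟨0, hd⟩⟩
  choose t ht using fun i => exists_mem_eq_sup univ univ_nonempty fun s => B i s + C s (σ i)
  obtain ⟨i, j, hij, htij⟩ := Fintype.exists_ne_map_eq_of_card_lt t (by simpa using hdk)
  refine ⟨σ * swap i j, by rw [Perm.sign_mul, Perm.sign_swap hij, mul_neg_one], ?_⟩
  refine sum_le_sum_of_eq_off_pair hij ?_ fun l hli hlj => by
    rw [Perm.mul_apply, swap_apply_of_ne_of_ne hli hlj]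
  simp only [Perm.mul_apply, swap_apply_left, swap_apply_right]
  have hi : mpMul B C i (σ i) = B i (t i) + C (t i) (σ i) := (ht i).2
  have hj : mpMul B C j (σ j) = B j (t j) + C (t j) (σ j) := (ht j).2
  rw [hi, hj, htij]
  calc B i (t j) + C (t j) (σ i) + (B j (t j) + C (t j) (σ j))
      = (B i (t j) + C (t j) (σ j)) + (B j (t j) + C (t j) (σ i)) := by ac_rfl
    _ ≤ mpMul B C i (σ j) + mpMul B C j (σ i) :=
      add_le_add (le_sup (f := fun s => B i s + C s (σ j)) (mem_univ _))
        (le_sup (f := fun s => B j s + C s (σ i)) (mem_univ _))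

lemma detp_eq_detm_of_forall_exists_sign_neg {M : Matrix (Fin k) (Fin k) (WithBot ℝ)}
    (h : ∀ σ : Perm (Fin k), ∃ τ : Perm (Fin k), Perm.sign τ = -Perm.sign σ ∧
      ∑ i, M i (σ i) ≤ ∑ i, M i (τ i)) :
    detp M = detm M := by
  have hdom : ∀ ε : ℤˣ, (univ.filter fun σ : Perm (Fin k) => Perm.sign σ = ε).sup
      (fun σ => ∑ i, M i (σ i)) ≤
        (univ.filter fun σ : Perm (Fin k) => Perm.sign σ = -ε).sup fun σ => ∑ i, M i (σ i) := by
    intro ε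
    refine Finset.sup_le fun σ hσ => ?_
    obtain ⟨τ, hτ, hle⟩ := h σ
    refine hle.trans (le_sup (f := fun σ : Perm (Fin k) => ∑ i, M i (σ i)) ?_)
    rw [mem_filter] at hσ ⊢
    exact ⟨mem_univ τ, by rw [hτ, hσ.2]⟩
  have := hdom (-1)
  rw [neg_neg] at this
  exact le_antisymm (hdom 1) this

lemma not_tropNonsing_of_forall_exists_sign_neg {M : Matrix (Fin k) (Fin k) (WithBot ℝ)}
    (h : ∀ σ : Perm (Fin k), ∃ τ : Perm (Fin k), Perm.sign τ = -Perm.sign σ ∧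
      ∑ i, M i (σ i) ≤ ∑ i, M i (τ i)) :
    ¬ TropNonsing M := by
  rintro ⟨σ, -, hσ⟩
  obtain ⟨τ, hτ, hle⟩ := h σ
  exact (hσ τ fun h => units_ne_neg_self _ (h ▸ hτ)).not_ge hle

variable {m n : ℕ}

lemma tropRank_mpMul_le (hd : 0 < d) (B : Matrix (Fin m) (Fin d) (WithBot ℝ))
    (C : Matrix (Fin d) (Fin n) (WithBot ℝ)) : tropRank (mpMul B C) ≤ d :=
  csSup_le' fun _ ⟨r, c, _, _, hM⟩ => by
    by_contra! hdk
    exact not_tropNonsing_of_forall_exists_sign_neg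
      (exists_sign_neg_sum_le_of_lt hd hdk (fun a t => B (r a) t) fun t b => C t (c b)) hM

lemma detRank_mpMul_le (hd : 0 < d) (B : Matrix (Fin m) (Fin d) (WithBot ℝ))
    (C : Matrix (Fin d) (Fin n) (WithBot ℝ)) : detRank (mpMul B C) ≤ d :=
  csSup_le' fun _ ⟨r, c, _, _, hM⟩ => by
    by_contra! hdk
    exact hM (detp_eq_detm_of_forall_exists_sign_neg
      (exists_sign_neg_sum_le_of_lt hd hdk (fun a t => B (r a) t) fun t b => C t (c b)))

end Exchange

section Ranks

variable {k m n : ℕ}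

lemma bddAbove_of_exists_injective {S : Set ℕ} (h : ∀ k ∈ S, ∃ r : Fin k → Fin m, Injective r) :
    BddAbove S :=
  ⟨m, fun k hk => let ⟨r, hr⟩ := h k hk; Fin.le_of_injective r hr⟩

lemma bddAbove_gmIndep (A : Matrix (Fin m) (Fin n) (WithBot ℝ)) :
    BddAbove {k | ∃ r : Fin k → Fin m, Injective r ∧ ¬ GMdep fun i => A (r i)} :=
  bddAbove_of_exists_injective fun _ ⟨r, hr, _⟩ => ⟨r, hr⟩

lemma le_gmRowRank {A : Matrix (Fin m) (Fin n) (WithBot ℝ)} {r : Fin k → Fin m}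
    (hr : Injective r) (hA : ¬ GMdep fun i => A (r i)) : k ≤ gmRowRank A := by
  unfold gmRowRank
  exact le_csSup (bddAbove_gmIndep A) ⟨r, hr, hA⟩

lemma exists_injective_not_gmdep (A : Matrix (Fin m) (Fin n) (WithBot ℝ)) :
    ∃ r : Fin (gmRowRank A) → Fin m, Injective r ∧ ¬ GMdep fun i => A (r i) := by
  refine Nat.sSup_mem ?_ (bddAbove_gmIndep A)
  exact ⟨0, finZeroElim, injective_of_subsingleton _, fun ⟨_, _, ⟨j, _⟩, _⟩ => j.elim0⟩

lemma gmRowRank_le_two {A : Matrix (Fin m) (Fin n) (WithBot ℝ)} {g : Fin 2 → Fin n → WithBot ℝ}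
    (h : ∀ i, A i ∈ mpSpanFam g) : gmRowRank A ≤ 2 :=
  csSup_le' fun k ⟨r, _, hA⟩ => by
    by_contra! hk
    exact hA (GMdep.of_comp (Fin.castLE_injective hk)
      (gmdep_of_forall_mem_mpSpanFam_pair fun t => h _))

lemma mpMul_mem_mpSpanFam (B : Matrix (Fin m) (Fin k) (WithBot ℝ))
    (C : Matrix (Fin k) (Fin n) (WithBot ℝ)) (i : Fin m) : mpMul B C i ∈ mpSpanFam C :=
  ⟨B i, rfl⟩

lemma mpMul_transpose_mem_mpSpanFam (B : Matrix (Fin m) (Fin k) (WithBot ℝ))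
    (C : Matrix (Fin k) (Fin n) (WithBot ℝ)) (j : Fin n) : (mpMul B C)ᵀ j ∈ mpSpanFam Bᵀ :=
  ⟨fun t => C t j, funext fun _ => by simp only [mpMul, Matrix.transpose_apply, add_comm]⟩

lemma exists_eq_mpMul {A : Matrix (Fin m) (Fin n) (WithBot ℝ)} {g : Fin k → Fin n → WithBot ℝ}
    (h : ∀ i, A i ∈ mpSpanFam g) : ∃ B : Matrix (Fin m) (Fin k) (WithBot ℝ), A = mpMul B g := by
  choose B hB using h
  exact ⟨B, funext hB⟩

lemma gmdep_of_forall_mem_mpSpanFam_of_le_one {g : Fin k → Fin n → WithBot ℝ} (hk : k ≤ 1)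
    {w : Fin 2 → Fin n → WithBot ℝ} (h : ∀ t, w t ∈ mpSpanFam g) : GMdep w := by
  obtain ⟨α, hα⟩ := h 0
  obtain ⟨β, hβ⟩ := h 1
  refine gmdep_pair_iff.2 fun l l' => ?_
  rw [hα, hβ]
  interval_cases k
  · simp
  · simp only [univ_unique, sup_singleton]
    ac_rfl

lemma facRank_le {A : Matrix (Fin m) (Fin n) (WithBot ℝ)} {B : Matrix (Fin m) (Fin k) (WithBot ℝ)}
    {C : Matrix (Fin k) (Fin n) (WithBot ℝ)} (h : A = mpMul B C) : facRank A ≤ k :=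
  Nat.sInf_le ⟨B, C, h⟩

lemma two_le_facRank {A : Matrix (Fin m) (Fin n) (WithBot ℝ)} {r : Fin 2 → Fin m}
    (hA : ¬ GMdep fun t => A (r t)) : 2 ≤ facRank A := by
  obtain ⟨B, hB⟩ := exists_eq_mpMul (mem_mpSpanFam_self A)
  refine le_csInf ⟨m, B, A, hB⟩ fun k ⟨B', C, h⟩ => ?_
  by_contra! hk
  exact hA (gmdep_of_forall_mem_mpSpanFam_of_le_one (by omega)
    fun t => h ▸ mpMul_mem_mpSpanFam B' C (r t))

lemma rowRank_le {A : Matrix (Fin m) (Fin n) (WithBot ℝ)} {g : Fin k → Fin n → WithBot ℝ}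
    (h : mpSpanFam g = mpRowSpace A) : rowRank A ≤ k :=
  Nat.sInf_le ⟨g, h⟩

lemma two_le_rowRank {A : Matrix (Fin m) (Fin n) (WithBot ℝ)} {r : Fin 2 → Fin m}
    (hA : ¬ GMdep fun t => A (r t)) : 2 ≤ rowRank A :=
  le_csInf ⟨m, A, rfl⟩ fun k ⟨g, h⟩ => by
    by_contra! hk
    exact hA (gmdep_of_forall_mem_mpSpanFam_of_le_one (g := g) (by omega)
      fun t => by rw [h]; exact mem_mpSpanFam_self _ (r t))

lemma perm_fin_two (σ : Perm (Fin 2)) : σ = 1 ∨ σ = swap 0 1 := by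
  revert σ
  decide

lemma detp_fin_two (M : Matrix (Fin 2) (Fin 2) (WithBot ℝ)) : detp M = M 0 0 + M 1 1 := by
  have : (univ.filter fun σ : Perm (Fin 2) => Perm.sign σ = 1) = {1} := by decide
  simp [detp, this]

lemma detm_fin_two (M : Matrix (Fin 2) (Fin 2) (WithBot ℝ)) : detm M = M 0 1 + M 1 0 := by
  have : (univ.filter fun σ : Perm (Fin 2) => Perm.sign σ = -1) = {swap 0 1} := by decide
  simp [detm, this]

lemma tropNonsing_fin_two {M : Matrix (Fin 2) (Fin 2) (WithBot ℝ)}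
    (h : M 0 0 + M 1 1 ≠ M 0 1 + M 1 0) : TropNonsing M := by
  have hid : ∑ i, M i ((1 : Perm (Fin 2)) i) = M 0 0 + M 1 1 := by simp
  have hswap : ∑ i, M i (swap 0 1 i) = M 0 1 + M 1 0 := by simp
  rcases h.lt_or_gt with hlt | hlt
  · refine ⟨swap 0 1, hswap ▸ (bot_le.trans_lt hlt).ne', fun τ hτ => ?_⟩
    rw [(perm_fin_two τ).resolve_right hτ, hid, hswap]
    exact hlt
  · refine ⟨1, hid ▸ (bot_le.trans_lt hlt).ne', fun τ hτ => ?_⟩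
    rw [(perm_fin_two τ).resolve_left hτ, hid, hswap]
    exact hlt

lemma two_le_tropRank {A : Matrix (Fin m) (Fin n) (WithBot ℝ)} {i j : Fin m} {l l' : Fin n}
    (h : A i l + A j l' ≠ A i l' + A j l) : 2 ≤ tropRank A := by
  have hij : i ≠ j := by rintro rfl; exact h (add_comm _ _)
  have hll' : l ≠ l' := by rintro rfl; exact h rfl
  exact le_csSup (bddAbove_of_exists_injective fun _ ⟨r, _, hr, _⟩ => ⟨r, hr⟩)
    ⟨![i, j], ![l, l'], by simpa using hij, by simpa using hll', tropNonsing_fin_two (by simpa)⟩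

lemma two_le_detRank {A : Matrix (Fin m) (Fin n) (WithBot ℝ)} {i j : Fin m} {l l' : Fin n}
    (h : A i l + A j l' ≠ A i l' + A j l) : 2 ≤ detRank A := by
  have hij : i ≠ j := by rintro rfl; exact h (add_comm _ _)
  have hll' : l ≠ l' := by rintro rfl; exact h rfl
  refine le_csSup (bddAbove_of_exists_injective fun _ ⟨r, _, hr, _⟩ => ⟨r, hr⟩)
    ⟨![i, j], ![l, l'], by simpa using hij, by simpa using hll', ?_⟩
  have hp := detp_fin_two fun a b => A (![i, j] a) (![l, l'] b)
  have hm := detm_fin_two fun a b => A (![i, j] a) (![l, l'] b)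
  simp only [Matrix.cons_val_zero, Matrix.cons_val_one] at hp hm
  rw [hp, hm]
  exact h

lemma two_le_gmRowRank_transpose {A : Matrix (Fin m) (Fin n) (WithBot ℝ)} {i j : Fin m}
    {l l' : Fin n} (h : A i l + A j l' ≠ A i l' + A j l) : 2 ≤ gmRowRank Aᵀ := by
  have hll' : l ≠ l' := by rintro rfl; exact h rfl
  refine le_gmRowRank (r := ![l, l']) (by simpa using hll') fun hd => h ?_
  have := gmdep_pair_iff.1 hd i j
  simp only [Matrix.cons_val_zero, Matrix.cons_val_one, Matrix.transpose_apply] at this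
  rw [this, add_comm]

end Ranks

theorem ranks_eq_of_gmRowRank_eq_two_general {n : ℕ}
    (A : Matrix (Fin n) (Fin n) (WithBot ℝ)) (h : gmRowRank A = 2) :
    tropRank A = 2 ∧ detRank A = 2 ∧ gmRowRank A = 2 ∧ gmRowRank A.transpose = 2 ∧
      facRank A = 2 ∧ rowRank A = 2 := by
  obtain ⟨r, hr, hind⟩ : ∃ r : Fin 2 → Fin n, Injective r ∧ ¬ GMdep fun t => A (r t) :=
    h ▸ exists_injective_not_gmdep A
  have hdep : ∀ r : Fin 3 → Fin n, Injective r → GMdep fun t => A (r t) := fun r hr =>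
    not_not.1 fun hA => by simpa [h] using le_gmRowRank hr hA
  obtain ⟨l, l', hll'⟩ : ∃ l l', A (r 0) l + A (r 1) l' ≠ A (r 0) l' + A (r 1) l := by
    simpa [gmdep_pair_iff] using hind
  obtain ⟨p, q, hpq⟩ := exists_rows_forall_mem_mpSpanFam_pair A hdep (hr.ne zero_ne_one)
    (fun h0 => hind (gmdep_of_eq_bot h0)) (fun h1 => hind (gmdep_of_eq_bot h1))
  have hrow : mpSpanFam ![A p, A q] = mpRowSpace A := subset_antisymm
    (mpSpanFam_subset (Fin.forall_fin_two.2 ⟨mem_mpSpanFam_self A p, mem_mpSpanFam_self A q⟩))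
    (mpSpanFam_subset hpq)
  obtain ⟨B, hB⟩ := exists_eq_mpMul hpq
  refine ⟨?_, ?_, h, ?_, facRank_le hB |>.antisymm (two_le_facRank hind),
    rowRank_le hrow |>.antisymm (two_le_rowRank hind)⟩
  · exact (hB ▸ tropRank_mpMul_le two_pos B _).antisymm (two_le_tropRank hll')
  · exact (hB ▸ detRank_mpMul_le two_pos B _).antisymm (two_le_detRank hll')
  · exact (gmRowRank_le_two (hB ▸ mpMul_transpose_mem_mpSpanFam B _)).antisymm
      (two_le_gmRowRank_transpose hll')

/-- If the maximal Gondran–Minoux row rank of an `n×n` max-plus matrix (`n ≥ 2`)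
equals `2`, then the tropical rank, the determinantal rank, the maximal row and
column Gondran–Minoux ranks, the factor rank, and the row rank all equal `2`. -/
theorem ranks_eq_of_gmRowRank_eq_two {n : ℕ} (hn : 2 ≤ n)
    (A : Matrix (Fin n) (Fin n) (WithBot ℝ)) (h : gmRowRank A = 2) :
    tropRank A = 2 ∧ detRank A = 2 ∧ gmRowRank A = 2 ∧ gmRowRank A.transpose = 2 ∧
      facRank A = 2 ∧ rowRank A = 2 :=
  ranks_eq_of_gmRowRank_eq_two_general A h
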